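/- arXiv:0812.3601 — 4 statements merged into one kernel-verified Lean document; each statement's English description precedes it below -/
import Mathlib

section
/- Let C be a C*-category and ω : C → ℂ a *-functor. Then the set I_ω := {x ∈ C | ω(x) = 0} equals {x ∈ C | ω(x*x) = 0}, and I_ω is a closed two-sided ideal in C. -/
open ComplexConjugate

/-- A C*-category: Hom spaces are complex Banach spaces, composition is bilinear and
submultiplicative, and there is an antilinear involutive contravariant *-operation fixing
objects, satisfying the C*-identity and positivity. -/
class CStarCat (O : Type*) (Hom : O → O → Type*)
    [∀ A B, NormedAddCommGroup (Hom A B)] [∀ A B, NormedSpace ℂ (Hom A B)] where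
  complete : ∀ A B, CompleteSpace (Hom A B)
  comp : ∀ {A B C : O}, Hom A B → Hom B C → Hom A C
  ide : ∀ A : O, Hom A A
  comp_assoc : ∀ {A B C D : O} (x : Hom A B) (y : Hom B C) (z : Hom C D),
      comp (comp x y) z = comp x (comp y z)
  ide_comp : ∀ {A B : O} (x : Hom A B), comp (ide A) x = x
  comp_ide : ∀ {A B : O} (x : Hom A B), comp x (ide B) = x
  comp_add_left : ∀ {A B C : O} (x y : Hom A B) (z : Hom B C),
      comp (x + y) z = comp x z + comp y z
  comp_add_right : ∀ {A B C : O} (x : Hom A B) (y z : Hom B C),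
      comp x (y + z) = comp x y + comp x z
  comp_smul_left : ∀ {A B C : O} (c : ℂ) (x : Hom A B) (z : Hom B C),
      comp (c • x) z = c • comp x z
  comp_smul_right : ∀ {A B C : O} (c : ℂ) (x : Hom A B) (z : Hom B C),
      comp x (c • z) = c • comp x z
  norm_comp_le : ∀ {A B C : O} (x : Hom A B) (y : Hom B C), ‖comp x y‖ ≤ ‖x‖ * ‖y‖
  invol : ∀ {A B : O}, Hom A B → Hom B A
  invol_invol : ∀ {A B : O} (x : Hom A B), invol (invol x) = x
  invol_add : ∀ {A B : O} (x y : Hom A B), invol (x + y) = invol x + invol y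
  invol_smul : ∀ {A B : O} (c : ℂ) (x : Hom A B), invol (c • x) = (conj c) • invol x
  invol_comp : ∀ {A B C : O} (x : Hom A B) (y : Hom B C),
      invol (comp x y) = comp (invol y) (invol x)
  norm_invol_comp : ∀ {A B : O} (x : Hom A B), ‖comp (invol x) x‖ = ‖x‖ ^ 2
  pos : ∀ {A B : O} (x : Hom A B), ∃ y : Hom B B, comp (invol x) x = comp (invol y) y

/-- A ℂ-valued *-functor on a C*-category (ℂ viewed as a one-object C*-category). -/
structure CChar (O : Type*) (Hom : O → O → Type*)
    [∀ A B, NormedAddCommGroup (Hom A B)] [∀ A B, NormedSpace ℂ (Hom A B)]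
    [CStarCat O Hom] where
  ω : ∀ {A B : O}, Hom A B → ℂ
  map_add : ∀ {A B : O} (x y : Hom A B), ω (x + y) = ω x + ω y
  map_smul : ∀ {A B : O} (c : ℂ) (x : Hom A B), ω (c • x) = c * ω x
  map_comp : ∀ {A B C : O} (x : Hom A B) (y : Hom B C),
      ω (CStarCat.comp x y) = ω x * ω y
  map_ide : ∀ A : O, ω (CStarCat.ide A) = 1
  map_invol : ∀ {A B : O} (x : Hom A B), ω (CStarCat.invol x) = conj (ω x)

section Aux

variable {O : Type*} {Hom : O → O → Type*}
    [∀ A B, NormedAddCommGroup (Hom A B)] [∀ A B, NormedSpace ℂ (Hom A B)]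
    [CStarCat O Hom]

open CStarCat

/-- Powers of an endomorphism. -/
def cpow {B : O} (z : Hom B B) : ℕ → Hom B B
  | 0 => CStarCat.ide B
  | n + 1 => CStarCat.comp z (cpow z n)

lemma cchar_map_zero (ω : CChar O Hom) {A B : O} : ω.ω (0 : Hom A B) = 0 := by
  have : (0 : Hom A B) = (0 : ℂ) • (0 : Hom A B) := by simp
  rw [this, ω.map_smul]; simp

lemma cchar_map_sub (ω : CChar O Hom) {A B : O} (x y : Hom A B) :
    ω.ω (x - y) = ω.ω x - ω.ω y := by
  have h : x - y = x + (-1 : ℂ) • y := by rw [neg_one_smul]; abel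
  rw [h, ω.map_add, ω.map_smul]; ring

lemma cchar_bound_endo (ω : CChar O Hom) {B : O} (y : Hom B B) :
    ‖ω.ω y‖ ≤ ‖y‖ := by
  by_contra hcon
  push_neg at hcon
  set l : ℂ := ω.ω y with hl
  have hcon' : ‖y‖ < ‖l‖ := hcon
  have hl0 : l ≠ 0 := by
    intro h0
    rw [h0, norm_zero] at hcon'
    exact absurd hcon' (not_lt.mpr (norm_nonneg y))
  have hlpos : (0:ℝ) < ‖l‖ := norm_pos_iff.mpr hl0
  set z : Hom B B := l⁻¹ • y with hzdef
  have hz : ‖z‖ < 1 := by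
    rw [hzdef, norm_smul, norm_inv]
    rw [inv_mul_lt_iff₀ hlpos, mul_one]
    exact hcon'
  have hωz : ω.ω z = 1 := by
    rw [hzdef, ω.map_smul, ← hl, inv_mul_cancel₀ hl0]
  haveI : CompleteSpace (Hom B B) := CStarCat.complete B B
  -- norm bound on powers
  have hpow : ∀ n : ℕ, ‖cpow z n‖ ≤ ‖(CStarCat.ide B : Hom B B)‖ * ‖z‖ ^ n := by
    intro n
    induction n with
    | zero => simp [cpow]
    | succ n ih =>
      calc ‖cpow z (n+1)‖ ≤ ‖z‖ * ‖cpow z n‖ := CStarCat.norm_comp_le z _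
        _ ≤ ‖z‖ * (‖(CStarCat.ide B : Hom B B)‖ * ‖z‖ ^ n) := by
            exact mul_le_mul_of_nonneg_left ih (norm_nonneg z)
        _ = ‖(CStarCat.ide B : Hom B B)‖ * ‖z‖ ^ (n+1) := by ring
  have hsum : Summable (fun n => cpow z n) := by
    apply Summable.of_norm
    apply Summable.of_nonneg_of_le (fun n => norm_nonneg _) hpow
    exact (summable_geometric_of_lt_one (norm_nonneg z) hz).mul_left _
  set s : Hom B B := ∑' n, cpow z n with hs
  -- left multiplication by z is continuous linear
  let L : Hom B B →L[ℂ] Hom B B :=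
    LinearMap.mkContinuous
      { toFun := fun w => CStarCat.comp z w
        map_add' := fun a b => CStarCat.comp_add_right z a b
        map_smul' := fun c a => CStarCat.comp_smul_right c z a }
      ‖z‖ (fun w => CStarCat.norm_comp_le z w)
  have hLs : CStarCat.comp z s = ∑' n, CStarCat.comp z (cpow z n) := by
    have := L.map_tsum hsum
    simpa [L, LinearMap.mkContinuous_apply] using this
  have hshift : ∑' n, CStarCat.comp z (cpow z n) = s - CStarCat.ide B := by
    have h0 : s = cpow z 0 + ∑' n, cpow z (n + 1) := Summable.tsum_eq_zero_add hsum
    have : ∑' n, CStarCat.comp z (cpow z n) = ∑' n, cpow z (n + 1) := by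
      apply tsum_congr; intro n; rfl
    rw [this]
    rw [h0]
    simp [cpow]
  have hkey : s - CStarCat.comp z s = CStarCat.ide B := by
    rw [hLs, hshift]; abel
  have h1 : ω.ω (s - CStarCat.comp z s) = 0 := by
    rw [cchar_map_sub, ω.map_comp, hωz, one_mul, sub_self]
  rw [hkey, ω.map_ide B] at h1
  exact one_ne_zero h1

lemma cchar_bound (ω : CChar O Hom) {A B : O} (x : Hom A B) :
    ‖ω.ω x‖ ≤ ‖x‖ := by
  have h1 : ω.ω (CStarCat.comp (CStarCat.invol x) x) = conj (ω.ω x) * ω.ω x := by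
    rw [ω.map_comp, ω.map_invol]
  have h2 : ‖ω.ω (CStarCat.comp (CStarCat.invol x) x)‖ ≤ ‖x‖ ^ 2 := by
    calc ‖ω.ω (CStarCat.comp (CStarCat.invol x) x)‖
        ≤ ‖CStarCat.comp (CStarCat.invol x) x‖ := cchar_bound_endo ω _
      _ = ‖x‖ ^ 2 := CStarCat.norm_invol_comp x
  rw [h1] at h2
  have h3 : ‖conj (ω.ω x) * ω.ω x‖ = ‖ω.ω x‖ ^ 2 := by
    rw [norm_mul, RCLike.norm_conj, sq]
  rw [h3] at h2
  nlinarith [norm_nonneg (ω.ω x), norm_nonneg x]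

lemma cchar_continuous (ω : CChar O Hom) {A B : O} :
    Continuous (fun x : Hom A B => ω.ω x) := by
  have : LipschitzWith 1 (fun x : Hom A B => ω.ω x) := by
    apply LipschitzWith.of_dist_le_mul
    intro x y
    rw [dist_eq_norm, dist_eq_norm, ← cchar_map_sub]
    simpa using cchar_bound ω (x - y)
  exact this.continuous

end Aux

/-- For a ℂ-valued *-functor ω on a C*-category, the set I_ω of arrows
killed by ω equals {x | ω(x*x) = 0}, and I_ω is a closed two-sided ideal (closed under
addition, scalar multiplication, involution, and composition with arbitrary arrows). -/
theorem cchar_kernel_ideal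
    {O : Type*} {Hom : O → O → Type*}
    [∀ A B, NormedAddCommGroup (Hom A B)] [∀ A B, NormedSpace ℂ (Hom A B)]
    [CStarCat O Hom] (ω : CChar O Hom) :
    ∀ A B : O,
      {x : Hom A B | ω.ω x = 0} =
        {x : Hom A B | ω.ω (CStarCat.comp (CStarCat.invol x) x) = 0} ∧
      IsClosed {x : Hom A B | ω.ω x = 0} ∧
      ω.ω (0 : Hom A B) = 0 ∧
      (∀ x y : Hom A B, ω.ω x = 0 → ω.ω y = 0 → ω.ω (x + y) = 0) ∧
      (∀ (c : ℂ) (x : Hom A B), ω.ω x = 0 → ω.ω (c • x) = 0) ∧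
      (∀ x : Hom A B, ω.ω x = 0 → ω.ω (CStarCat.invol x) = 0) ∧
      (∀ (C : O) (x : Hom A B) (y : Hom B C), ω.ω x = 0 → ω.ω (CStarCat.comp x y) = 0) ∧
      (∀ (C : O) (x : Hom A B) (y : Hom C A), ω.ω x = 0 → ω.ω (CStarCat.comp y x) = 0) := by
  intro A B
  refine ⟨?_, ?_, cchar_map_zero ω, ?_, ?_, ?_, ?_, ?_⟩
  · ext x
    simp only [Set.mem_setOf_eq, ω.map_comp, ω.map_invol]
    constructor
    · intro h; rw [h]; simp
    · intro h
      rcases mul_eq_zero.mp h with h' | h'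
      · exact star_eq_zero.mp h'
      · exact h'
  · have : {x : Hom A B | ω.ω x = 0} = (fun x : Hom A B => ω.ω x) ⁻¹' {0} := rfl
    rw [this]
    exact IsClosed.preimage (cchar_continuous ω) isClosed_singleton
  · intro x y hx hy; rw [ω.map_add, hx, hy, add_zero]
  · intro c x hx; rw [ω.map_smul, hx, mul_zero]
  · intro x hx; rw [ω.map_invol, hx, map_zero]
  · intro C x y hx; rw [ω.map_comp, hx, zero_mul]
  · intro C x y hx; rw [ω.map_comp, hx, mul_zero]
end

section
/- Two *-functors ω, ω' : C → ℂ on a full commutative C*-category C are unitarily equivalent if and only if their restrictions to every diagonal block agree: ω|_{C_{AA}} = ω'|_{C_{AA}} for all objects A. -/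
/-!
If `ω` and `ω'` agree on each `C_{AA}`, applying this to `x ∘ y*` for `x, y ∈ C_{AB}` gives
`ω' x · conj (ω' y) = ω x · conj (ω y)`, hence `|ω' x| = |ω x|` and `ω' x · ω y = ω x · ω' y`.
Fullness makes `ω` nonzero on every `C_{A A₀}`, so choosing `y_A ∈ C_{A A₀}` with `ω y_A ≠ 0`,
the ratios `ν_A = ω' y_A / ω y_A` are unit complex numbers forming a natural transformation.
-/

open ComplexConjugate

/-- Unitary equivalence of ℂ-valued *-functors, by a unitary natural transformation. -/
def UnitEquiv {O : Type*} {Hom : O → O → Type*}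
    [∀ A B, NormedAddCommGroup (Hom A B)] [∀ A B, NormedSpace ℂ (Hom A B)]
    [CStarCat O Hom] (ω ω' : CChar O Hom) : Prop :=
  ∃ ν : O → ℂ, (∀ A, ‖ν A‖ = 1) ∧
    ∀ {A B : O} (x : Hom A B), ω'.ω x * ν B = ν A * ω.ω x

/-- A C*-category is commutative if every diagonal block is a commutative C*-algebra. -/
def IsCommutative (O : Type*) (Hom : O → O → Type*)
    [∀ A B, NormedAddCommGroup (Hom A B)] [∀ A B, NormedSpace ℂ (Hom A B)]
    [CStarCat O Hom] : Prop :=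
  ∀ (A : O) (x y : Hom A A), CStarCat.comp x y = CStarCat.comp y x

/-- A C*-category is full if for all objects A, B the span of the products
C_{AB} ∘ C_{BA} is dense in C_{AA} (imprimitivity of the off-diagonal bimodules). -/
def IsFull (O : Type*) (Hom : O → O → Type*)
    [∀ A B, NormedAddCommGroup (Hom A B)] [∀ A B, NormedSpace ℂ (Hom A B)]
    [CStarCat O Hom] : Prop :=
  ∀ A B : O,
    closure ((Submodule.span ℂ
      {z : Hom A A | ∃ (x : Hom A B) (y : Hom B A), z = CStarCat.comp x y} :
        Submodule ℂ (Hom A A)) : Set (Hom A A)) = Set.univ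

namespace CStarCat

variable {O : Type*} {Hom : O → O → Type*}
  [∀ A B, NormedAddCommGroup (Hom A B)] [∀ A B, NormedSpace ℂ (Hom A B)] [CStarCat O Hom]

noncomputable def compLeft {A B : O} (u : Hom A B) (C : O) : Hom B C →L[ℂ] Hom A C :=
  LinearMap.mkContinuous
    { toFun := comp u
      map_add' := comp_add_right u
      map_smul' := fun c z => comp_smul_right c u z }
    ‖u‖ (norm_comp_le u)

theorem norm_compLeft_le {A B : O} (u : Hom A B) (C : O) : ‖compLeft u C‖ ≤ ‖u‖ :=
  LinearMap.mkContinuous_norm_le _ (norm_nonneg u) _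

/-- The Neumann series `∑ uⁿ⁺¹` solves `c = u + u ∘ c` when `‖u‖ < 1`. -/
theorem exists_eq_add_comp_of_norm_lt_one {A : O} (u : Hom A A) (hu : ‖u‖ < 1) :
    ∃ c : Hom A A, c = u + comp u c := by
  have : CompleteSpace (Hom A A) := complete A A
  set L := compLeft u A
  have hL : ‖L‖ < 1 := (norm_compLeft_le u A).trans_lt hu
  refine ⟨(∑' n : ℕ, L ^ n) u, ?_⟩
  have h := congrArg (· u) (mul_neg_geom_series L hL)
  simp only [mul_apply_eq_comp, sub_apply, one_apply_eq_self] at h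
  exact sub_eq_iff_eq_add.mp h

end CStarCat

namespace CChar

variable {O : Type*} {Hom : O → O → Type*}
  [∀ A B, NormedAddCommGroup (Hom A B)] [∀ A B, NormedSpace ℂ (Hom A B)] [CStarCat O Hom]

def toLinearMap (ω : CChar O Hom) (A B : O) : Hom A B →ₗ[ℂ] ℂ where
  toFun := ω.ω
  map_add' := ω.map_add
  map_smul' := ω.map_smul

theorem map_sub (ω : CChar O Hom) {A B : O} (x y : Hom A B) : ω.ω (x - y) = ω.ω x - ω.ω y :=
  (ω.toLinearMap A B).map_sub x y

theorem apply_ne_one_of_norm_lt_one (ω : CChar O Hom) {A : O} {u : Hom A A} (hu : ‖u‖ < 1) :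
    ω.ω u ≠ 1 := by
  intro h
  obtain ⟨c, hc⟩ := CStarCat.exists_eq_add_comp_of_norm_lt_one u hu
  have := congrArg ω.ω hc
  rw [ω.map_add, ω.map_comp, h, one_mul, right_eq_add] at this
  exact one_ne_zero this

/-- Otherwise `ω` would vanish on a dense subspace of `C_{AA}`, hence at some `z` with
`‖1 - z‖ < 1`, where `ω (1 - z) = 1`. -/
theorem exists_apply_ne_zero (hf : IsFull O Hom) (ω : CChar O Hom) (A B : O) :
    ∃ x : Hom A B, ω.ω x ≠ 0 := by
  by_contra! h
  have hspan : Submodule.span ℂ {z : Hom A A | ∃ (x : Hom A B) (y : Hom B A),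
      z = CStarCat.comp x y} ≤ LinearMap.ker (ω.toLinearMap A A) := by
    rw [Submodule.span_le]
    rintro _ ⟨x, y, rfl⟩
    simp [toLinearMap, ω.map_comp, h x]
  have hide : CStarCat.ide A ∈ closure (Submodule.span ℂ {z : Hom A A |
      ∃ (x : Hom A B) (y : Hom B A), z = CStarCat.comp x y} : Set (Hom A A)) := by
    rw [hf A B]; trivial
  obtain ⟨z, hz, hdist⟩ := Metric.mem_closure_iff.mp hide 1 one_pos
  refine ω.apply_ne_one_of_norm_lt_one (u := CStarCat.ide A - z) (by rwa [← dist_eq_norm]) ?_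
  rw [ω.map_sub, ω.map_ide, show ω.ω z = 0 from hspan hz, sub_zero]

section AgreeOnDiagonal

variable {ω ω' : CChar O Hom} {A : O}

theorem apply_mul_conj_eq (h : ∀ x : Hom A A, ω.ω x = ω'.ω x) {B : O} (p q : Hom A B) :
    ω'.ω p * conj (ω'.ω q) = ω.ω p * conj (ω.ω q) := by
  have := h (CStarCat.comp p (CStarCat.invol q))
  rwa [ω.map_comp, ω.map_invol, ω'.map_comp, ω'.map_invol, eq_comm] at this

theorem norm_apply_eq (h : ∀ x : Hom A A, ω.ω x = ω'.ω x) {B : O} (x : Hom A B) :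
    ‖ω'.ω x‖ = ‖ω.ω x‖ := by
  have := apply_mul_conj_eq h x x
  rw [Complex.mul_conj', Complex.mul_conj'] at this
  exact (pow_left_inj₀ (norm_nonneg _) (norm_nonneg _) two_ne_zero).mp (by exact_mod_cast this)

theorem apply_mul_apply_comm (h : ∀ x : Hom A A, ω.ω x = ω'.ω x) {B : O} (p q : Hom A B) :
    ω'.ω p * ω.ω q = ω.ω p * ω'.ω q := by
  rcases eq_or_ne (ω'.ω q) 0 with hq | hq
  · have hq' : ω.ω q = 0 := norm_eq_zero.mp (by rw [← norm_apply_eq h, hq, norm_zero])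
    rw [hq, hq', mul_zero, mul_zero]
  · refine mul_right_cancel₀ ((map_ne_zero conj).mpr hq) ?_
    linear_combination ω.ω q * apply_mul_conj_eq h p q - ω.ω p * apply_mul_conj_eq h q q

end AgreeOnDiagonal

end CChar

theorem UnitEquiv.apply_eq {O : Type*} {Hom : O → O → Type*}
    [∀ A B, NormedAddCommGroup (Hom A B)] [∀ A B, NormedSpace ℂ (Hom A B)] [CStarCat O Hom]
    {ω ω' : CChar O Hom} (he : UnitEquiv ω ω') {A : O} (x : Hom A A) : ω.ω x = ω'.ω x := by
  obtain ⟨ν, hν, hnat⟩ := he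
  have hνA : ν A ≠ 0 := norm_ne_zero_iff.mp (by rw [hν A]; exact one_ne_zero)
  exact mul_left_cancel₀ hνA (by rw [← hnat x, mul_comm])

theorem unitEquiv_of_apply_eq {O : Type*} {Hom : O → O → Type*}
    [∀ A B, NormedAddCommGroup (Hom A B)] [∀ A B, NormedSpace ℂ (Hom A B)] [CStarCat O Hom]
    (hf : IsFull O Hom) (A₀ : O) {ω ω' : CChar O Hom}
    (h : ∀ (A : O) (x : Hom A A), ω.ω x = ω'.ω x) : UnitEquiv ω ω' := by
  choose y hy using fun A => ω.exists_apply_ne_zero hf A A₀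
  refine ⟨fun A => ω'.ω (y A) / ω.ω (y A), fun A => ?_, fun {A B} x => ?_⟩
  · rw [norm_div, CChar.norm_apply_eq (h A), div_self (norm_ne_zero_iff.mpr (hy A))]
  · have hk := CChar.apply_mul_apply_comm (h A) (CStarCat.comp x (y B)) (y A)
    rw [ω.map_comp, ω'.map_comp] at hk
    field_simp [hy A, hy B]
    linear_combination hk

theorem unitEquiv_iff_agree_on_diagonals_general
    {O : Type*} {Hom : O → O → Type*}
    [∀ A B, NormedAddCommGroup (Hom A B)] [∀ A B, NormedSpace ℂ (Hom A B)]
    [CStarCat O Hom]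
    (hf : IsFull O Hom)
    (ω ω' : CChar O Hom) :
    UnitEquiv ω ω' ↔ ∀ (A : O) (x : Hom A A), ω.ω x = ω'.ω x := by
  refine ⟨fun he A => he.apply_eq, fun h => ?_⟩
  rcases isEmpty_or_nonempty O with _ | ⟨⟨A₀⟩⟩
  · exact ⟨fun _ => 1, fun _ => norm_one, fun {A} => isEmptyElim A⟩
  · exact unitEquiv_of_apply_eq hf A₀ h

/-- On a full commutative C*-category, two ℂ-valued *-functors are
unitarily equivalent iff their restrictions to every diagonal block agree. -/
theorem unitEquiv_iff_agree_on_diagonals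
    {O : Type*} {Hom : O → O → Type*}
    [∀ A B, NormedAddCommGroup (Hom A B)] [∀ A B, NormedSpace ℂ (Hom A B)]
    [CStarCat O Hom]
    (hc : IsCommutative O Hom) (hf : IsFull O Hom)
    (ω ω' : CChar O Hom) :
    UnitEquiv ω ω' ↔ ∀ (A : O) (x : Hom A A), ω.ω x = ω'.ω x :=
  unitEquiv_iff_agree_on_diagonals_general hf ω ω'
end

section
/- Let C be a one-dimensional C*-category (all Hom spaces are one-dimensional complex Hilbert spaces) whose set of objects is nonempty. Then there exists at least one *-functor γ : C → ℂ. -/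
open ComplexConjugate

/-!
If `Hom A A` is one-dimensional it is `ℂ • ide A`, and reading off the coefficient is a
*-homomorphism `Hom A A → ℂ`. Fix an object `A₀`. For a nonzero `e : A₀ ⟶ B`, positivity writes
`e* e` as `y* y` with `y = d • ide B`, i.e. as `|d|² • ide B` with `|d| ≠ 0` by the C*-identity, so
`u_B = |d|⁻¹ • e` satisfies `u_B* u_B = ide B`; then `u_B u_B*` is a nonzero idempotent of
`Hom A₀ A₀`, hence `ide A₀`. Conjugating by these unitaries, `x ↦ u_A x u_B*` maps every Hom space
into `Hom A₀ A₀ ≅ ℂ` compatibly with composition and involution. (Products are written in the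
diagrammatic order of `comp`.)
-/

namespace CStarCat

variable {O : Type*} {Hom : O → O → Type*}
  [∀ A B, NormedAddCommGroup (Hom A B)] [∀ A B, NormedSpace ℂ (Hom A B)] [CStarCat O Hom]
  {A B C : O}

lemma zero_comp (z : Hom B C) : comp (0 : Hom A B) z = 0 := by
  simpa using comp_smul_left (0 : ℂ) (0 : Hom A B) z

lemma comp_zero (x : Hom A B) : comp x (0 : Hom B C) = 0 := by
  simpa using comp_smul_right (0 : ℂ) x (0 : Hom B C)

lemma invol_ide (A : O) : invol (ide A) = (ide A : Hom A A) :=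
  calc invol (ide A) = comp (invol (ide A)) (invol (invol (ide A : Hom A A))) := by
        rw [invol_invol, comp_ide]
    _ = invol (invol (ide A)) := by rw [← invol_comp, comp_ide]
    _ = ide A := invol_invol _

lemma ide_ne_zero [Nontrivial (Hom A A)] : (ide A : Hom A A) ≠ 0 := by
  obtain ⟨x, hx⟩ := exists_ne (0 : Hom A A)
  intro h
  exact hx (by rw [← ide_comp x, h, zero_comp])

lemma invol_comp_self_ne_zero {x : Hom A B} (hx : x ≠ 0) : comp (invol x) x ≠ 0 := by
  intro h
  have : ‖x‖ ^ 2 = 0 := by rw [← norm_invol_comp, h, norm_zero]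
  exact hx (by simpa using this)

section Scalar

variable (hA : Module.finrank ℂ (Hom A A) = 1)

/-- The coordinate of an endomorphism in the basis `ide A` of the line `Hom A A`. -/
noncomputable def scalar : Hom A A ≃ₗ[ℂ] ℂ :=
  haveI := Module.nontrivial_of_finrank_eq_succ hA
  (LinearEquiv.ofBijective (LinearMap.toSpanSingleton ℂ (Hom A A) (ide A))
    ⟨smul_left_injective ℂ ide_ne_zero,
      (finrank_eq_one_iff_of_nonzero' _ ide_ne_zero).mp hA⟩).symm

lemma scalar_eq_iff {x : Hom A A} {c : ℂ} : scalar hA x = c ↔ x = c • ide A :=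
  (LinearEquiv.eq_symm_apply _).symm

lemma scalar_smul_ide (x : Hom A A) : scalar hA x • ide A = x :=
  ((scalar_eq_iff hA).1 rfl).symm

lemma scalar_ide : scalar hA (ide A) = 1 :=
  (scalar_eq_iff hA).2 (one_smul ℂ _).symm

lemma scalar_comp (x y : Hom A A) : scalar hA (comp x y) = scalar hA x * scalar hA y := by
  rw [scalar_eq_iff]
  conv_lhs => rw [← scalar_smul_ide hA x, ← scalar_smul_ide hA y]
  rw [comp_smul_left, comp_smul_right, ide_comp, smul_smul]

lemma scalar_invol (x : Hom A A) : scalar hA (invol x) = conj (scalar hA x) := by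
  rw [scalar_eq_iff]
  conv_lhs => rw [← scalar_smul_ide hA x]
  rw [invol_smul, invol_ide]

lemma scalar_invol_comp_self (x : Hom A A) :
    scalar hA (comp (invol x) x) = (‖scalar hA x‖ : ℂ) ^ 2 := by
  rw [scalar_comp, scalar_invol, Complex.conj_mul']

end Scalar

lemma exists_invol_comp_self_eq_ide (hB : Module.finrank ℂ (Hom B B) = 1)
    [Nontrivial (Hom A B)] : ∃ u : Hom A B, comp (invol u) u = ide B := by
  obtain ⟨e, he⟩ := exists_ne (0 : Hom A B)
  obtain ⟨y, hy⟩ := pos e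
  set r : ℝ := ‖scalar hB y‖
  have her : comp (invol e) e = (r : ℂ) ^ 2 • ide B := by
    rw [← scalar_smul_ide hB (comp (invol e) e), hy, scalar_invol_comp_self]
  have hr : (r : ℂ) ≠ 0 := by
    intro hr
    exact invol_comp_self_ne_zero he (by rw [her, hr, zero_pow two_ne_zero, zero_smul])
  refine ⟨(r : ℂ)⁻¹ • e, ?_⟩
  rw [invol_smul, comp_smul_left, comp_smul_right, her, smul_smul, smul_smul, map_inv₀,
    Complex.conj_ofReal, show (r : ℂ)⁻¹ * (r : ℂ)⁻¹ * (r : ℂ) ^ 2 = 1 by field_simp, one_smul]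

lemma comp_invol_self_eq_ide (hA : Module.finrank ℂ (Hom A A) = 1) [Nontrivial (Hom B B)]
    {u : Hom A B} (hu : comp (invol u) u = ide B) : comp u (invol u) = ide A := by
  set p := comp u (invol u)
  have hp : IsIdempotentElem (scalar hA p) := by
    rw [IsIdempotentElem, ← scalar_comp]
    simp only [p, comp_assoc]
    rw [← comp_assoc (invol u), hu, ide_comp]
  have hp0 : p ≠ 0 := by
    intro h
    have : comp (invol u) (comp p u) = ide B := by
      simp only [p, ← comp_assoc]
      rw [hu, ide_comp, hu]
    exact ide_ne_zero (by rw [← this, h, zero_comp, comp_zero])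
  have hp1 : scalar hA p = 1 :=
    (IsIdempotentElem.iff_eq_zero_or_one.1 hp).resolve_left ((LinearEquiv.map_ne_zero_iff _).2 hp0)
  rw [(scalar_eq_iff hA).1 hp1, one_smul]

lemma exists_unitary (hA : Module.finrank ℂ (Hom A A) = 1) (hB : Module.finrank ℂ (Hom B B) = 1)
    [Nontrivial (Hom A B)] :
    ∃ u : Hom A B, comp (invol u) u = ide B ∧ comp u (invol u) = ide A := by
  have := Module.nontrivial_of_finrank_eq_succ hB
  obtain ⟨u, hu⟩ := exists_invol_comp_self_eq_ide hB (A := A)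
  exact ⟨u, hu, comp_invol_self_eq_ide hA hu⟩

noncomputable def _root_.CChar.ofUnitaries {A₀ : O} (h : Module.finrank ℂ (Hom A₀ A₀) = 1)
    (u : ∀ B, Hom A₀ B) (hu : ∀ B, comp (invol (u B)) (u B) = ide B)
    (hu' : ∀ B, comp (u B) (invol (u B)) = ide A₀) : CChar O Hom where
  ω {A B} x := scalar h (comp (comp (u A) x) (invol (u B)))
  map_add x y := by rw [comp_add_right, comp_add_left, map_add]
  map_smul c x := by rw [comp_smul_right, comp_smul_left, map_smul, smul_eq_mul]
  map_comp {A B C} x y := by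
    rw [← scalar_comp]
    simp only [comp_assoc]
    rw [← comp_assoc (invol (u B)), hu, ide_comp]
  map_ide A := by rw [comp_ide, hu', scalar_ide]
  map_invol x := by rw [← scalar_invol, invol_comp, invol_comp, invol_invol, comp_assoc]

end CStarCat

/-- A one-dimensional C*-category (all Hom spaces one-dimensional) with a
nonempty set of objects admits at least one ℂ-valued *-functor. -/
theorem one_dimensional_cstarCat_has_character
    {O : Type*} {Hom : O → O → Type*}
    [∀ A B, NormedAddCommGroup (Hom A B)] [∀ A B, NormedSpace ℂ (Hom A B)]
    [CStarCat O Hom] [Nonempty O]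
    (h1 : ∀ A B : O, Module.finrank ℂ (Hom A B) = 1) :
    Nonempty (CChar O Hom) := by
  obtain ⟨A₀⟩ := ‹Nonempty O›
  have hnt (B : O) : Nontrivial (Hom A₀ B) := Module.nontrivial_of_finrank_eq_succ (h1 A₀ B)
  choose u hu hu' using fun B => CStarCat.exists_unitary (h1 A₀ A₀) (h1 B B)
  exact ⟨.ofUnitaries (h1 A₀ A₀) u hu hu'⟩
end

section
/- Let C be a commutative C*-category and C° a *-subcategory of C (same objects) that is itself a full C*-category with C°_{AA} = C_{AA} for all objects A. Then C°_{AB} = C_{AB} for all objects A, B. -/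
open ComplexConjugate

/-- Let C be a commutative C*-category and C° a *-subcategory (same
objects, given by closed subspaces S A B stable under composition, involution and
containing the identities) which is itself a full C*-category with C°_{AA} = C_{AA} for
all A. Then C°_{AB} = C_{AB} for all A, B. -/
theorem full_subcategory_with_same_diagonals_is_everything
    {O : Type*} {Hom : O → O → Type*}
    [∀ A B, NormedAddCommGroup (Hom A B)] [∀ A B, NormedSpace ℂ (Hom A B)]
    [CStarCat O Hom]
    (hc : IsCommutative O Hom)
    (S : ∀ A B : O, Submodule ℂ (Hom A B))
    (hclosed : ∀ A B : O, IsClosed (S A B : Set (Hom A B)))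
    (hcomp : ∀ {A B C : O} (x : Hom A B) (y : Hom B C),
      x ∈ S A B → y ∈ S B C → CStarCat.comp x y ∈ S A C)
    (hstar : ∀ {A B : O} (x : Hom A B), x ∈ S A B → CStarCat.invol x ∈ S B A)
    (hide : ∀ A : O, CStarCat.ide A ∈ S A A)
    (hdiag : ∀ A : O, S A A = ⊤)
    (hfull : ∀ A B : O,
      closure ((Submodule.span ℂ
        {z : Hom A A | ∃ x ∈ S A B, ∃ y ∈ S B A, z = CStarCat.comp x y} :
          Submodule ℂ (Hom A A)) : Set (Hom A A)) = Set.univ) :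
    ∀ A B : O, S A B = ⊤ := by
  intro A B
  ext w
  simp only [Submodule.mem_top, iff_true]
  -- linear map z ↦ w ∘ z
  set f : Hom B B →ₗ[ℂ] Hom A B :=
    { toFun := fun z => CStarCat.comp w z
      map_add' := fun y z => CStarCat.comp_add_right w y z
      map_smul' := fun c z => CStarCat.comp_smul_right c w z }
  have hf : Continuous f := by
    refine (f.mkContinuous ‖w‖ ?_).continuous
    intro z
    exact CStarCat.norm_comp_le w z
  have hspan : (Submodule.span ℂ
      {z : Hom B B | ∃ x ∈ S B A, ∃ y ∈ S A B, z = CStarCat.comp x y}) ≤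
      (S A B).comap f := by
    rw [Submodule.span_le]
    rintro z ⟨x, hx, y, hy, rfl⟩
    show CStarCat.comp w (CStarCat.comp x y) ∈ S A B
    rw [← CStarCat.comp_assoc]
    refine hcomp _ _ ?_ hy
    rw [hdiag]
    trivial
  have hmem : CStarCat.ide B ∈ closure ((Submodule.span ℂ
      {z : Hom B B | ∃ x ∈ S B A, ∃ y ∈ S A B, z = CStarCat.comp x y} :
        Submodule ℂ (Hom B B)) : Set (Hom B B)) := by
    rw [hfull B A]; trivial
  have := map_mem_closure (t := (S A B : Set (Hom A B))) hf hmem (fun z hz => hspan hz)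
  rw [(hclosed A B).closure_eq] at this
  have hw : f (CStarCat.ide B) = w := CStarCat.comp_ide w
  rwa [hw] at this
end
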